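/- arXiv:2403.15784 — 2 statements merged into one kernel-verified Lean document; each statement's English description precedes it below -/
import Mathlib

section
/- Let A ⊂ [1,2] be a measurable set such that for all x ∈ ℝ and all r with δ ≤ r ≤ 1 one has Leb(A ∩ [x−r, x+r]) ≤ C·δ·(r/δ)^s, where 0 < s ≤ 1 and 0 < δ < 1, and assume A is a union of intervals of length δ (so the bound Leb(A ∩ [x−r,x+r]) ≤ C δ (r/δ)^s extends, up to constant, to all 0 < r ≤ 1). Then for every α with 0 < α < s, sup_{x ∈ ℝ} ∫_A |x−y|^{−α} dy ≤ C'(α, s, C) · δ^{1−s}. -/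
open MeasureTheory Set

/-- A (δ,s)-set A ⊆ [1,2] has α-amplitude (of its indicator) at most C'·δ^{1-s}
for every 0 < α < s, with C' depending only on α, s and the non-concentration constant C. -/
theorem amplitude_of_delta_s_set (s C α : ℝ) (hs0 : 0 < s) (hs1 : s ≤ 1) (hC : 0 < C)
    (hα0 : 0 < α) (hαs : α < s) :
    ∃ C' : ℝ, 0 < C' ∧
      ∀ (δ : ℝ), 0 < δ → δ < 1 →
      ∀ A : Set ℝ, MeasurableSet A → A ⊆ Set.Icc 1 2 →
      (∀ (x r : ℝ), 0 < r → r ≤ 1 →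
        volume (A ∩ Set.Icc (x - r) (x + r)) ≤ ENNReal.ofReal (C * δ * (r / δ) ^ s)) →
      ∀ x : ℝ, ∫⁻ y in A, ENNReal.ofReal (|x - y| ^ (-α)) ≤
        ENNReal.ofReal (C' * δ ^ (1 - s)) := by
  set p : ℝ := s / α with hp
  have hp1 : 1 < p := (one_lt_div hα0).mpr hαs
  have hp10 : 0 < p - 1 := by linarith
  have hinv : (0:ℝ) < 1 / (p - 1) := one_div_pos.mpr hp10
  refine ⟨C * (1 + 1 / (p - 1)), mul_pos hC (by linarith), ?_⟩
  intro δ hδ0 hδ1 A hAm hA12 hfr x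
  set D : ℝ := C * δ ^ (1 - s) with hD
  have hD0 : 0 < D := by positivity
  have hδs : ∀ r : ℝ, 0 < r → C * δ * (r / δ) ^ s = D * r ^ s := by
    intro r hr
    rw [hD, Real.div_rpow hr.le hδ0.le, Real.rpow_sub hδ0, Real.rpow_one]
    field_simp
  have hfm : Measurable fun y : ℝ => |x - y| ^ (-α) := by fun_prop
  rw [lintegral_eq_lintegral_meas_lt (volume.restrict A)
      (Filter.Eventually.of_forall fun y => Real.rpow_nonneg (abs_nonneg _) _)
      hfm.aemeasurable]
  have key : ∀ t ∈ Ioi (0:ℝ), (volume.restrict A) {y : ℝ | t < |x - y| ^ (-α)}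
      ≤ ENNReal.ofReal (D * min 1 (t ^ (-p))) := by
    intro t (ht : 0 < t)
    have hSm : MeasurableSet {y : ℝ | t < |x - y| ^ (-α)} :=
      measurableSet_lt measurable_const hfm
    rw [Measure.restrict_apply hSm]
    rcases le_or_gt t 1 with h1 | h1
    · have hmin : (1:ℝ) ≤ t ^ (-p) := by
        rw [← Real.rpow_zero t]
        exact Real.rpow_le_rpow_of_exponent_ge ht h1 (by linarith)
      rw [min_eq_left hmin, mul_one]
      calc volume ({y : ℝ | t < |x - y| ^ (-α)} ∩ A)
          ≤ volume (A ∩ Set.Icc ((3:ℝ)/2 - 1) ((3:ℝ)/2 + 1)) := by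
            apply measure_mono
            intro y hy
            have h := hA12 hy.2
            exact ⟨hy.2, ⟨by linarith [h.1], by linarith [h.2]⟩⟩
        _ ≤ ENNReal.ofReal (C * δ * (1 / δ) ^ s) := hfr _ 1 one_pos le_rfl
        _ = ENNReal.ofReal D := by rw [hδs 1 one_pos, Real.one_rpow, mul_one]
    · set r : ℝ := t ^ (-(1/α)) with hr
      have hr0 : 0 < r := Real.rpow_pos_of_pos ht _
      have hr1 : r ≤ 1 := by
        rw [hr, ← Real.rpow_zero t]
        apply Real.rpow_le_rpow_of_exponent_le h1.le
        simp [one_div, (inv_pos.mpr hα0).le]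
      have hsub : {y : ℝ | t < |x - y| ^ (-α)} ∩ A ⊆ A ∩ Set.Icc (x - r) (x + r) := by
        rintro y ⟨hy1, hy2⟩
        refine ⟨hy2, ?_⟩
        have hxy : |x - y| < r := by
          by_contra h
          push_neg at h
          have h0 : 0 < |x - y| := lt_of_lt_of_le hr0 h
          have hle : |x - y| ^ (-α) ≤ r ^ (-α) :=
            Real.rpow_le_rpow_of_nonpos hr0 h (by linarith)
          have hrα : r ^ (-α) = t := by
            rw [hr, ← Real.rpow_mul ht.le, neg_mul_neg, one_div,
              inv_mul_cancel₀ hα0.ne', Real.rpow_one]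
          rw [hrα] at hle
          exact absurd hy1 (not_lt.mpr hle)
        rw [abs_sub_lt_iff] at hxy
        exact ⟨by linarith [hxy.1], by linarith [hxy.2]⟩
      calc volume ({y : ℝ | t < |x - y| ^ (-α)} ∩ A)
          ≤ volume (A ∩ Set.Icc (x - r) (x + r)) := measure_mono hsub
        _ ≤ ENNReal.ofReal (C * δ * (r / δ) ^ s) := hfr x r hr0 hr1
        _ = ENNReal.ofReal (D * t ^ (-p)) := by
            rw [hδs r hr0, hr, ← Real.rpow_mul ht.le]
            congr 2
            rw [hp]; field_simp
        _ = ENNReal.ofReal (D * min 1 (t ^ (-p))) := by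
            have : t ^ (-p) < 1 :=
              Real.rpow_lt_one_of_one_lt_of_neg h1 (by linarith)
            rw [min_eq_right this.le]
  calc ∫⁻ t in Ioi (0:ℝ), (volume.restrict A) {y : ℝ | t < |x - y| ^ (-α)}
      ≤ ∫⁻ t in Ioi (0:ℝ), ENNReal.ofReal (D * min 1 (t ^ (-p))) :=
        setLIntegral_mono_ae (by fun_prop) (Filter.Eventually.of_forall key)
    _ = (∫⁻ t in Ioc (0:ℝ) 1, ENNReal.ofReal (D * min 1 (t ^ (-p)))) +
        ∫⁻ t in Ioi (1:ℝ), ENNReal.ofReal (D * min 1 (t ^ (-p))) := by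
        rw [← lintegral_union measurableSet_Ioi, Set.Ioc_union_Ioi_eq_Ioi zero_le_one]
        exact Set.Ioc_disjoint_Ioi le_rfl
    _ ≤ ENNReal.ofReal D + ENNReal.ofReal D * ENNReal.ofReal (1 / (p - 1)) := by
        gcongr
        · calc ∫⁻ t in Ioc (0:ℝ) 1, ENNReal.ofReal (D * min 1 (t ^ (-p)))
              ≤ ∫⁻ _ in Ioc (0:ℝ) 1, ENNReal.ofReal D :=
                setLIntegral_mono_ae aemeasurable_const (Filter.Eventually.of_forall
                  fun t _ => ENNReal.ofReal_le_ofReal (by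
                    nlinarith [min_le_left (1:ℝ) (t ^ (-p)), hD0.le]))
            _ = ENNReal.ofReal D := by
                rw [setLIntegral_const, Real.volume_Ioc]; norm_num
        · calc ∫⁻ t in Ioi (1:ℝ), ENNReal.ofReal (D * min 1 (t ^ (-p)))
              ≤ ∫⁻ t in Ioi (1:ℝ), ENNReal.ofReal D * ENNReal.ofReal (t ^ (-p)) := by
                apply setLIntegral_mono_ae (by fun_prop)
                refine Filter.Eventually.of_forall fun t _ => ?_
                rw [← ENNReal.ofReal_mul hD0.le]
                exact ENNReal.ofReal_le_ofReal
                  (mul_le_mul_of_nonneg_left (min_le_right _ _) hD0.le)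
            _ = ENNReal.ofReal D * ∫⁻ t in Ioi (1:ℝ), ENNReal.ofReal (t ^ (-p)) := by
                rw [lintegral_const_mul _ (by fun_prop)]
            _ = ENNReal.ofReal D * ENNReal.ofReal (1 / (p - 1)) := by
                congr 1
                rw [← ofReal_integral_eq_lintegral_ofReal
                    (integrableOn_Ioi_rpow_of_lt (by linarith) one_pos)
                    ((ae_restrict_iff' measurableSet_Ioi).2 (Filter.Eventually.of_forall
                      fun t ht => Real.rpow_nonneg (le_of_lt (lt_trans one_pos ht)) _))]
                rw [integral_Ioi_rpow_of_lt (by linarith) one_pos, Real.one_rpow,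
                  show -p + 1 = -(p-1) by ring, neg_div_neg_eq, one_div]
    _ = ENNReal.ofReal (C * (1 + 1 / (p - 1)) * δ ^ (1 - s)) := by
        rw [← ENNReal.ofReal_mul hD0.le, ← ENNReal.ofReal_add hD0.le (by positivity)]
        congr 1
        rw [hD]; ring
end

section
/- Let A ⊂ ℝ be a bounded measurable set with positive measure, let B, C ⊂ [1,2] be finite unions of intervals, and let L := {l_{b,c} : b ∈ B, c ∈ C} with l_{b,c} = {x₂ = c(x₁ − b)}. Let F be the δ-neighborhood of (A+B)×(A·C) and define I_δ(F, L) := {(x, (b,c)) ∈ F × (B × C) : dist(x, l_{b,c}) ≤ δ}. Then Leb_{ℝ²×ℝ²}(I_δ(F, L)) ≥ c₀ · δ · Leb(A) · Leb(B×C) for an absolute constant c₀ > 0 (assuming A is a union of intervals of length ≥ δ). -/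
open MeasureTheory Pointwise

/-- Volume of one "tube" slice in ℝ²: points whose first coordinate translates into `A`
and whose second coordinate is within `δ` of the line value. -/
lemma tube_slice_volume (A : Set ℝ) (hA : MeasurableSet A) (b c δ : ℝ) (hδ : 0 ≤ δ) :
    volume {x : ℝ × ℝ | x.1 - b ∈ A ∧ |x.2 - c * (x.1 - b)| ≤ δ}
      = ENNReal.ofReal (2 * δ) * volume A := by
  have hS : MeasurableSet {x : ℝ × ℝ | x.1 - b ∈ A ∧ |x.2 - c * (x.1 - b)| ≤ δ} := by
    apply MeasurableSet.inter
    · exact (measurable_fst.sub measurable_const) hA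
    · have : Measurable fun x : ℝ × ℝ => |x.2 - c * (x.1 - b)| :=
        (measurable_snd.sub ((measurable_fst.sub measurable_const).const_mul c)).abs
      exact this measurableSet_Iic
  rw [show (volume : Measure (ℝ × ℝ)) = (volume : Measure ℝ).prod volume from rfl,
    Measure.prod_apply hS]
  have hslice : ∀ x₁ : ℝ,
      (volume : Measure ℝ) (Prod.mk x₁ ⁻¹' {x : ℝ × ℝ | x.1 - b ∈ A ∧ |x.2 - c * (x.1 - b)| ≤ δ})
        = Set.indicator ((fun x => x - b) ⁻¹' A) (fun _ => ENNReal.ofReal (2 * δ)) x₁ := by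
    intro x₁
    by_cases h : x₁ - b ∈ A
    · have : Prod.mk x₁ ⁻¹' {x : ℝ × ℝ | x.1 - b ∈ A ∧ |x.2 - c * (x.1 - b)| ≤ δ}
          = Set.Icc (c * (x₁ - b) - δ) (c * (x₁ - b) + δ) := by
        ext t
        simp only [Set.mem_preimage, Set.mem_setOf_eq, Set.mem_Icc, h, true_and, abs_le]
        constructor
        · rintro ⟨h1, h2⟩; constructor <;> linarith
        · rintro ⟨h1, h2⟩; constructor <;> linarith
      have hx : x₁ ∈ (fun x : ℝ => x - b) ⁻¹' A := h
      rw [this, Real.volume_Icc, Set.indicator_of_mem hx]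
      congr 1; ring
    · have : Prod.mk x₁ ⁻¹' {x : ℝ × ℝ | x.1 - b ∈ A ∧ |x.2 - c * (x.1 - b)| ≤ δ}
          = (∅ : Set ℝ) := by
        ext t; simp [h]
      have hx : x₁ ∉ (fun x : ℝ => x - b) ⁻¹' A := h
      rw [this, Set.indicator_of_notMem hx]
      simp
  rw [lintegral_congr hslice, lintegral_indicator (show MeasurableSet ((fun x : ℝ => x - b) ⁻¹' A) from (measurable_id'.sub_const b) hA) _,
    setLIntegral_const]
  have htrans : volume ((fun x : ℝ => x - b) ⁻¹' A) = volume A := by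
    simp_rw [sub_eq_add_neg]
    exact measure_preimage_add_right volume (-b) A
  rw [htrans, mul_comm]

/-- Lower bound for the incidence between the δ-neighborhood of (A+B)×(A·C) and the family
of lines x₂ = c(x₁ − b) with (b,c) ∈ B × C. -/
theorem incidence_lower_bound :
    ∃ c₀ : ℝ, 0 < c₀ ∧
      ∀ (δ : ℝ), 0 < δ → δ ≤ 1 →
      ∀ (A B C : Set ℝ), MeasurableSet A → MeasurableSet B → MeasurableSet C →
      Bornology.IsBounded A → 0 < volume A →
      B ⊆ Set.Icc 1 2 → C ⊆ Set.Icc 1 2 →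
      (∃ (n : ℕ) (f g : Fin n → ℝ), B = ⋃ i, Set.Icc (f i) (g i)) →
      (∃ (n : ℕ) (f g : Fin n → ℝ), C = ⋃ i, Set.Icc (f i) (g i)) →
      (∀ x ∈ A, ∃ y z : ℝ, y ≤ x ∧ x ≤ z ∧ δ ≤ z - y ∧ Set.Icc y z ⊆ A) →
      ENNReal.ofReal (c₀ * δ) * volume A * volume (B ×ˢ C) ≤
        volume {q : (ℝ × ℝ) × (ℝ × ℝ) |
          q.1 ∈ Metric.cthickening δ ((A + B) ×ˢ (A * C)) ∧
          q.2 ∈ B ×ˢ C ∧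
          Metric.infDist q.1 {p : ℝ × ℝ | p.2 = q.2.2 * (p.1 - q.2.1)} ≤ δ} := by
  refine ⟨2, by norm_num, ?_⟩
  intro δ hδ hδ1 A B C hA hB hC _ _ _ _ _ _ _
  -- The tube set
  set T : Set ((ℝ × ℝ) × (ℝ × ℝ)) :=
    {q | q.2 ∈ B ×ˢ C ∧ q.1.1 - q.2.1 ∈ A ∧ |q.1.2 - q.2.2 * (q.1.1 - q.2.1)| ≤ δ} with hTdef
  have hTmeas : MeasurableSet T := by
    apply MeasurableSet.inter
    · exact measurable_snd ((hB.prod hC))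
    apply MeasurableSet.inter
    · exact ((measurable_fst.fst.sub measurable_snd.fst)) hA
    · have : Measurable fun q : (ℝ × ℝ) × (ℝ × ℝ) =>
          |q.1.2 - q.2.2 * (q.1.1 - q.2.1)| :=
        (measurable_fst.snd.sub
          (measurable_snd.snd.mul (measurable_fst.fst.sub measurable_snd.fst))).abs
      exact this measurableSet_Iic
  -- Volume of T
  have hTvol : volume T = ENNReal.ofReal (2 * δ) * volume A * volume (B ×ˢ C) := by
    rw [show (volume : Measure ((ℝ × ℝ) × (ℝ × ℝ)))
        = (volume : Measure (ℝ × ℝ)).prod volume from rfl,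
      Measure.prod_apply_symm hTmeas]
    have hslice : ∀ y : ℝ × ℝ,
        (volume : Measure (ℝ × ℝ)) ((fun x => (x, y)) ⁻¹' T)
          = Set.indicator (B ×ˢ C)
              (fun _ => ENNReal.ofReal (2 * δ) * volume A) y := by
      intro y
      by_cases hy : y ∈ B ×ˢ C
      · have : (fun x : ℝ × ℝ => (x, y)) ⁻¹' T
            = {x : ℝ × ℝ | x.1 - y.1 ∈ A ∧ |x.2 - y.2 * (x.1 - y.1)| ≤ δ} := by
          ext x
          simp only [hTdef, Set.mem_preimage, Set.mem_setOf_eq, Set.mem_prod, hy.1, hy.2,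
            true_and, and_true, and_self]
        rw [this, tube_slice_volume A hA y.1 y.2 δ hδ.le, Set.indicator_of_mem hy]
      · have : (fun x : ℝ × ℝ => (x, y)) ⁻¹' T = (∅ : Set (ℝ × ℝ)) := by
          ext x
          simp only [hTdef, Set.mem_preimage, Set.mem_setOf_eq, Set.mem_empty_iff_false,
            iff_false]
          intro hcon
          exact hy hcon.1
        rw [this, Set.indicator_of_notMem hy]
        simp
    rw [lintegral_congr hslice, lintegral_indicator (hB.prod hC) _, setLIntegral_const, mul_comm]
  -- T is contained in the incidence set
  have hsub : T ⊆ {q : (ℝ × ℝ) × (ℝ × ℝ) |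
      q.1 ∈ Metric.cthickening δ ((A + B) ×ˢ (A * C)) ∧
      q.2 ∈ B ×ˢ C ∧
      Metric.infDist q.1 {p : ℝ × ℝ | p.2 = q.2.2 * (p.1 - q.2.1)} ≤ δ} := by
    rintro ⟨⟨x₁, x₂⟩, ⟨b, c⟩⟩ ⟨⟨hb, hc⟩, ha, habs⟩
    simp only [Set.mem_setOf_eq] at ha habs ⊢
    refine ⟨?_, ⟨hb, hc⟩, ?_⟩
    · -- cthickening: witness ((x₁ - b) + b, (x₁ - b) * c)
      apply Metric.mem_cthickening_of_dist_le (x₁, x₂) ((x₁ - b + b, (x₁ - b) * c)) δ _ ?_ ?_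
      · exact Set.mk_mem_prod (Set.add_mem_add ha hb) (Set.mul_mem_mul ha hc)
      · rw [Prod.dist_eq]
        simp only [Real.dist_eq, sub_add_cancel, sub_self, abs_zero]
        rw [mul_comm (x₁ - b) c] at *
        exact max_le hδ.le (by simpa using habs)
    · -- infDist: witness (x₁, c * (x₁ - b))
      have hmem : (x₁, c * (x₁ - b)) ∈ {p : ℝ × ℝ | p.2 = c * (p.1 - b)} := rfl
      calc Metric.infDist (x₁, x₂) {p : ℝ × ℝ | p.2 = c * (p.1 - b)}
          ≤ dist (x₁, x₂) (x₁, c * (x₁ - b)) := Metric.infDist_le_dist_of_mem hmem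
        _ ≤ δ := by
            rw [Prod.dist_eq]
            simp only [Real.dist_eq, sub_self, abs_zero]
            exact max_le hδ.le habs
  calc ENNReal.ofReal (2 * δ) * volume A * volume (B ×ˢ C) = volume T := hTvol.symm
    _ ≤ _ := measure_mono hsub
end
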